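/- arXiv:0906.4238 — 11 statements merged into one kernel-verified Lean document; each statement's English description precedes it below -/
import Mathlib

section
/- Let d ≥ 1 and let K and L be nonempty compact convex subsets of ℝ^d such that K ∪ L is convex. Then for all points x, y ∈ ℝ^d, 𝟙([x,y] ∩ K ≠ ∅) + 𝟙([x,y] ∩ L ≠ ∅) = 𝟙([x,y] ∩ (K ∪ L) ≠ ∅) + 𝟙([x,y] ∩ (K ∩ L) ≠ ∅). -/
open scoped Classical

theorem ite_add_ite_eq_ite_or_add_ite_and {M : Type*} [AddCommMonoid M] (P Q : Prop)
    [Decidable P] [Decidable Q] (a : M) :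
    (if P then a else 0) + (if Q then a else 0)
      = (if P ∨ Q then a else 0) + (if P ∧ Q then a else 0) := by
  by_cases hP : P <;> by_cases hQ : Q <;> simp [hP, hQ, add_comm]

section

variable {E : Type*} [AddCommGroup E] [Module ℝ E] [TopologicalSpace E]
  [ContinuousAdd E] [ContinuousSMul ℝ E]

/-- A segment from a point of `K` to a point of `L` lies in `K ∪ L` and is connected, so it
cannot be covered by the closed sets `K` and `L` unless they meet on it. -/
theorem Convex.inter_inter_nonempty_of_convex_union {S K L : Set E} (hS : Convex ℝ S)
    (hK : IsClosed K) (hL : IsClosed L) (hKL : Convex ℝ (K ∪ L))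
    (hSK : (S ∩ K).Nonempty) (hSL : (S ∩ L).Nonempty) : (S ∩ (K ∩ L)).Nonempty := by
  obtain ⟨p, hpS, hpK⟩ := hSK
  obtain ⟨q, hqS, hqL⟩ := hSL
  obtain ⟨z, hz, hzKL⟩ := isPreconnected_closed_iff.mp (convex_segment p q).isPreconnected
    K L hK hL (hKL.segment_subset (.inl hpK) (.inr hqL))
    ⟨p, left_mem_segment ℝ p q, hpK⟩ ⟨q, right_mem_segment ℝ p q, hqL⟩
  exact ⟨z, hS.segment_subset hpS hqS hz, hzKL⟩

theorem Convex.inter_inter_nonempty_iff_of_convex_union {S K L : Set E} (hS : Convex ℝ S)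
    (hK : IsClosed K) (hL : IsClosed L) (hKL : Convex ℝ (K ∪ L)) :
    (S ∩ (K ∩ L)).Nonempty ↔ (S ∩ K).Nonempty ∧ (S ∩ L).Nonempty :=
  ⟨fun h => ⟨h.mono (Set.inter_subset_inter_right _ Set.inter_subset_left),
      h.mono (Set.inter_subset_inter_right _ Set.inter_subset_right)⟩,
    fun h => hS.inter_inter_nonempty_of_convex_union hK hL hKL h.1 h.2⟩

end

theorem segment_indicator_valuation_general
    (d : ℕ)
    (K L : Set (EuclideanSpace ℝ (Fin d)))
    (hKcp : IsCompact K) (hLcp : IsCompact L)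
    (hKLcv : Convex ℝ (K ∪ L))
    (x y : EuclideanSpace ℝ (Fin d)) :
    (if (segment ℝ x y ∩ K).Nonempty then (1 : ℝ) else 0)
      + (if (segment ℝ x y ∩ L).Nonempty then (1 : ℝ) else 0)
    = (if (segment ℝ x y ∩ (K ∪ L)).Nonempty then (1 : ℝ) else 0)
      + (if (segment ℝ x y ∩ (K ∩ L)).Nonempty then (1 : ℝ) else 0) := by
  simp_rw [Set.inter_union_distrib_left, Set.union_nonempty,
    (convex_segment x y).inter_inter_nonempty_iff_of_convex_union hKcp.isClosed hLcp.isClosed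
      hKLcv]
  exact ite_add_ite_eq_ite_or_add_ite_and _ _ 1

theorem segment_indicator_valuation
    (d : ℕ) (hd : 1 ≤ d)
    (K L : Set (EuclideanSpace ℝ (Fin d)))
    (hKne : K.Nonempty) (hLne : L.Nonempty)
    (hKcp : IsCompact K) (hLcp : IsCompact L)
    (hKcv : Convex ℝ K) (hLcv : Convex ℝ L)
    (hKLcv : Convex ℝ (K ∪ L))
    (x y : EuclideanSpace ℝ (Fin d)) :
    (if (segment ℝ x y ∩ K).Nonempty then (1 : ℝ) else 0)
      + (if (segment ℝ x y ∩ L).Nonempty then (1 : ℝ) else 0)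
    = (if (segment ℝ x y ∩ (K ∪ L)).Nonempty then (1 : ℝ) else 0)
      + (if (segment ℝ x y ∩ (K ∩ L)).Nonempty then (1 : ℝ) else 0) :=
  segment_indicator_valuation_general d K L hKcp hLcp hKLcv x y
end

section
/- Let d ≥ 2 and let K ⊆ ℝ^d be a compact convex set contained in an affine subspace of dimension at most d − 2. Then the set {(x, y) ∈ ℝ^d × ℝ^d : [x,y] ∩ K ≠ ∅} has Lebesgue measure zero in ℝ^d × ℝ^d. -/
/-!
If `[x, y]` meets `A` at `x + t • (y - x)`, then either `t = 0` and `x ∈ A`, or `y` is recovered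
from `x`, the meeting point and `t⁻¹`. So these pairs lie in the ranges of two differentiable maps,
from spaces of dimensions `dim A + d` and `d + dim A + 1`, both less than `2 d` when
`dim A ≤ d - 2`; and a differentiable map from a space of smaller dimension has a null range.
-/

open MeasureTheory Module Set

theorem addHaar_range_eq_zero_of_finrank_lt {M F : Type*}
    [NormedAddCommGroup M] [NormedSpace ℝ M] [FiniteDimensional ℝ M]
    [NormedAddCommGroup F] [NormedSpace ℝ F] [FiniteDimensional ℝ F]
    [MeasurableSpace F] [BorelSpace F] (μ : Measure F) [μ.IsAddHaarMeasure]
    {f : M → F} (hf : Differentiable ℝ f) (hMF : finrank ℝ M < finrank ℝ F) :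
    μ (range f) = 0 := by
  obtain ⟨k, hk⟩ : ∃ k, finrank ℝ F = finrank ℝ M + (k + 1) :=
    ⟨finrank ℝ F - finrank ℝ M - 1, by omega⟩
  let e : F ≃L[ℝ] M × (Fin (k + 1) → ℝ) := .ofFinrankEq (by simp [hk])
  let S : Submodule ℝ F := ((⊤ : Submodule ℝ M).prod ⊥).comap e.toLinearEquiv.toLinearMap
  have hS : S ≠ ⊤ := by
    intro h
    have : e.symm (0, 1) ∈ S := h ▸ Submodule.mem_top
    simp [S] at this
  have hg : Differentiable ℝ (f ∘ Prod.fst ∘ e) :=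
    hf.comp (differentiable_fst.comp e.differentiable)
  refine measure_mono_null ?_ (addHaar_image_eq_zero_of_differentiableOn_of_addHaar_eq_zero μ
    hg.differentiableOn (Measure.addHaar_submodule μ S hS))
  rintro _ ⟨m, rfl⟩
  exact ⟨e.symm (m, 0), by simp [S], by simp⟩

section Segment

variable {E : Type*} [NormedAddCommGroup E] [NormedSpace ℝ E]

theorem setOf_segment_inter_nonempty_subset {A : AffineSubspace ℝ E} {a : E} (ha : a ∈ A) :
    {p : E × E | (segment ℝ p.1 p.2 ∩ A).Nonempty} ⊆
      range (fun q : A.direction × E => (a + q.1, q.2)) ∪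
        range (fun q : E × A.direction × ℝ => (q.1, q.1 + q.2.2 • (a + q.2.1 - q.1))) := by
  rintro ⟨x, y⟩ ⟨k, hkxy, hkA⟩
  obtain ⟨t, -, rfl⟩ : ∃ t ∈ Icc (0 : ℝ) 1, x + t • (y - x) = k := by
    rwa [segment_eq_image', mem_image] at hkxy
  have hk : x + t • (y - x) - a ∈ A.direction := AffineSubspace.vsub_mem_direction hkA ha
  rcases eq_or_ne t 0 with rfl | ht
  · left
    exact ⟨(⟨_, hk⟩, y), by simp⟩
  · right
    refine ⟨(x, ⟨_, hk⟩, t⁻¹), ?_⟩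
    simp [smul_smul, inv_mul_cancel₀ ht]

theorem addHaar_setOf_segment_inter_nonempty_eq_zero [FiniteDimensional ℝ E]
    [MeasurableSpace (E × E)] [BorelSpace (E × E)] (μ : Measure (E × E)) [μ.IsAddHaarMeasure]
    (A : AffineSubspace ℝ E) (hA : finrank ℝ A.direction + 2 ≤ finrank ℝ E) :
    μ {p : E × E | (segment ℝ p.1 p.2 ∩ A).Nonempty} = 0 := by
  rcases A.eq_bot_or_nonempty with rfl | ⟨a, ha⟩
  · simp
  have hval : Differentiable ℝ (fun w : A.direction => (w : E)) :=
    A.direction.subtypeL.differentiable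
  refine measure_mono_null (setOf_segment_inter_nonempty_subset ha) (measure_union_null ?_ ?_)
  all_goals
    refine addHaar_range_eq_zero_of_finrank_lt μ (by fun_prop) ?_
    simp only [finrank_prod, finrank_self]
    omega

end Segment

theorem measure_zero_segment_meets_lowdim_convex_general
    (d : ℕ) (hd : 2 ≤ d) (K : Set (EuclideanSpace ℝ (Fin d)))
    (A : AffineSubspace ℝ (EuclideanSpace ℝ (Fin d)))
    (hKA : K ⊆ (A : Set (EuclideanSpace ℝ (Fin d))))
    (hdim : Module.finrank ℝ A.direction ≤ d - 2) :
    volume {p : EuclideanSpace ℝ (Fin d) × EuclideanSpace ℝ (Fin d) |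
      (segment ℝ p.1 p.2 ∩ K).Nonempty} = 0 := by
  rw [Measure.volume_eq_prod]
  refine measure_mono_null (fun p hp => hp.mono (inter_subset_inter_right _ hKA))
    (addHaar_setOf_segment_inter_nonempty_eq_zero _ A ?_)
  rw [finrank_euclideanSpace_fin]
  omega

theorem measure_zero_segment_meets_lowdim_convex
    (d : ℕ) (hd : 2 ≤ d) (K : Set (EuclideanSpace ℝ (Fin d)))
    (hKcp : IsCompact K) (hKcv : Convex ℝ K)
    (A : AffineSubspace ℝ (EuclideanSpace ℝ (Fin d)))
    (hKA : K ⊆ (A : Set (EuclideanSpace ℝ (Fin d))))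
    (hdim : Module.finrank ℝ A.direction ≤ d - 2) :
    volume {p : EuclideanSpace ℝ (Fin d) × EuclideanSpace ℝ (Fin d) |
      (segment ℝ p.1 p.2 ∩ K).Nonempty} = 0 :=
  measure_zero_segment_meets_lowdim_convex_general d hd K A hKA hdim
end

section
/- Let K ⊂ ℝ^d be a compact convex set, let X ⊆ ℝ^d be a locally finite set, and let δ > 0. Assume that every point y ∈ ℝ^d with dist(y, ∂K) ≤ 3δ satisfies dist(y, X) ≤ δ. Then for every x ∈ X with dist(x, ∂K) ≤ δ, the Voronoi cell v_X(x) is contained in the closed ball of radius δ centered at x. -/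
open Metric

/-- The Voronoi cell of `x` with respect to the point set `X`:
all points at least as close to `x` as to any point of `X`. -/
def voronoiCell {d : ℕ} (X : Set (EuclideanSpace ℝ (Fin d)))
    (x : EuclideanSpace ℝ (Fin d)) : Set (EuclideanSpace ℝ (Fin d)) :=
  {z | ∀ y ∈ X, dist z x ≤ dist z y}

/-!
A point `z` of the cell beyond distance `δ` from `x` would give, on the segment `[x, z]` at
distance `s = min (2δ) ‖z - x‖ > δ` from `x`, a point `p` within `3δ` of `∂K`. Since `p` lies
between `z` and `x`, the point `x` stays a nearest point of `X` to `p`, so `dist(p, X) = s > δ`,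
contradicting the density assumption.
-/

theorem infDist_eq_dist_of_dist_add_dist_eq {α : Type*} [PseudoMetricSpace α] {X : Set α}
    {x z p : α} (hxX : x ∈ X) (hz : ∀ y ∈ X, dist z x ≤ dist z y)
    (hp : dist z p + dist p x = dist z x) : infDist p X = dist p x := by
  refine le_antisymm (infDist_le_dist_of_mem hxX) ((le_infDist ⟨x, hxX⟩).2 fun y hyX => ?_)
  linarith [hz y hyX, dist_triangle z p y]

theorem exists_dist_eq_and_dist_eq_sub {E P : Type*} [NormedAddCommGroup E] [NormedSpace ℝ E]
    [MetricSpace P] [NormedAddTorsor E P] (x z : P) {s : ℝ} (hs₀ : 0 ≤ s) (hs : s ≤ dist x z) :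
    ∃ p, dist p x = s ∧ dist p z = dist x z - s := by
  rcases hs₀.eq_or_lt with rfl | hs₀
  · exact ⟨x, dist_self x, by rw [sub_zero]⟩
  have hxz : 0 < dist x z := hs₀.trans_le hs
  have ht₁ : s / dist x z ≤ 1 := div_le_one_of_le₀ hs hxz.le
  refine ⟨AffineMap.lineMap x z (s / dist x z), ?_, ?_⟩
  · rw [dist_lineMap_left, Real.norm_of_nonneg (by positivity), div_mul_cancel₀ s hxz.ne']
  · rw [dist_lineMap_right, Real.norm_of_nonneg (sub_nonneg.2 ht₁), sub_mul, one_mul,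
      div_mul_cancel₀ s hxz.ne']

theorem voronoiCell_subset_closedBall_of_dense_near_boundary_general
    {d : ℕ} (K X : Set (EuclideanSpace ℝ (Fin d)))
    (δ : ℝ) (hδ : 0 < δ)
    (hdense : ∀ y : EuclideanSpace ℝ (Fin d),
      infDist y (frontier K) ≤ 3 * δ → infDist y X ≤ δ) :
    ∀ x ∈ X, infDist x (frontier K) ≤ δ →
      voronoiCell X x ⊆ closedBall x δ := by
  intro x hxX hxK z hz
  by_contra hzδ
  rw [mem_closedBall, not_le, dist_comm] at hzδ
  set s := min (2 * δ) (dist x z)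
  obtain ⟨p, hpx, hpz⟩ :=
    exists_dist_eq_and_dist_eq_sub x z (s := s) (by positivity) (min_le_right _ _)
  have hpX : infDist p X = s := by
    rw [← hpx]
    refine infDist_eq_dist_of_dist_add_dist_eq hxX hz ?_
    rw [dist_comm z p, hpz, hpx, dist_comm z x, sub_add_cancel]
  have hpK : infDist p (frontier K) ≤ 3 * δ := by
    linarith [infDist_le_infDist_add_dist (x := p) (y := x) (s := frontier K),
      min_le_left (2 * δ) (dist x z)]
  have hδs : δ < s := lt_min (by linarith) hzδ
  linarith [hdense p hpK]

theorem voronoiCell_subset_closedBall_of_dense_near_boundary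
    {d : ℕ} (K X : Set (EuclideanSpace ℝ (Fin d)))
    (hKcp : IsCompact K) (hKcv : Convex ℝ K)
    (hXlf : ∀ C : Set (EuclideanSpace ℝ (Fin d)), IsCompact C → (X ∩ C).Finite)
    (δ : ℝ) (hδ : 0 < δ)
    (hdense : ∀ y : EuclideanSpace ℝ (Fin d),
      infDist y (frontier K) ≤ 3 * δ → infDist y X ≤ δ) :
    ∀ x ∈ X, infDist x (frontier K) ≤ δ →
      voronoiCell X x ⊆ closedBall x δ :=
  voronoiCell_subset_closedBall_of_dense_near_boundary_general K X δ hδ hdense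
end

section
/- Let K ⊂ ℝ^d be a compact convex set, let X ⊆ ℝ^d be a locally finite set, and let δ > 0. Assume that every point y ∈ ℝ^d with dist(y, ∂K) ≤ 3δ satisfies dist(y, X) ≤ δ. Then for all x, x′ ∈ X, if v_X(x) ∩ ∂K ≠ ∅ and v_X(x) ∩ v_X(x′) ≠ ∅, then dist(x′, ∂K) ≤ 3δ. -/
open Metric

theorem exists_dist_eq_of_le_dist {E : Type*} [NormedAddCommGroup E] [NormedSpace ℝ E]
    {p z : E} {s : ℝ} (hs : 0 ≤ s) (hsp : s ≤ dist p z) :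
    ∃ w, dist w p = s ∧ dist w z = dist p z - s := by
  rcases hsp.eq_or_lt' with rfl | hlt
  · exact ⟨z, dist_comm z p, by simp⟩
  have hpz : dist p z ≠ 0 := (hs.trans_lt hlt).ne'
  have hc : s / dist p z ≤ 1 := div_le_one_of_le₀ hlt.le dist_nonneg
  refine ⟨AffineMap.lineMap p z (s / dist p z), ?_, ?_⟩
  · rw [dist_lineMap_left, Real.norm_of_nonneg (by positivity), div_mul_cancel₀ _ hpz]
  · rw [dist_lineMap_right, Real.norm_of_nonneg (sub_nonneg.2 hc), sub_mul,
      div_mul_cancel₀ _ hpz, one_mul]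

theorem dist_le_two_mul_of_forall_infDist_le {E : Type*} [NormedAddCommGroup E]
    [NormedSpace ℝ E] {X : Set E} {p x z : E} {δ : ℝ} (hδ : 0 < δ)
    (hnear : ∀ w, dist w p ≤ 3 * δ → infDist w X ≤ δ)
    (hpx : dist p x ≤ δ) (hzx : dist z x ≤ infDist z X) :
    dist z p ≤ 2 * δ := by
  by_contra! hfar
  set s := min (dist z p) (3 * δ)
  have hs : 2 * δ < s := lt_min hfar (by linarith)
  obtain ⟨w, hwp, hwz⟩ :=
    exists_dist_eq_of_le_dist (by linarith) ((min_le_left _ _).trans_eq (dist_comm z p))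
  have hwX : infDist w X ≤ δ := hnear w (hwp.trans_le (min_le_right _ _))
  have : dist z p ≤ dist z p - s + 2 * δ :=
    calc dist z p ≤ dist z x + dist x p := dist_triangle z x p
      _ ≤ infDist z X + δ := by rw [dist_comm x p]; gcongr
      _ ≤ infDist w X + dist w z + δ := by
        rw [dist_comm w z]; gcongr; exact infDist_le_infDist_add_dist
      _ ≤ dist z p - s + 2 * δ := by rw [hwz, dist_comm p z]; linarith
  linarith

section Voronoi

variable {d : ℕ} {X : Set (EuclideanSpace ℝ (Fin d))} {x z : EuclideanSpace ℝ (Fin d)}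

theorem infDist_eq_dist_of_mem_voronoiCell (hx : x ∈ X) (hz : z ∈ voronoiCell X x) :
    infDist z X = dist z x :=
  le_antisymm (infDist_le_dist_of_mem hx) ((le_infDist ⟨x, hx⟩).2 hz)

theorem dist_le_of_mem_voronoiCell {δ : ℝ} (hx : x ∈ X) (hz : z ∈ voronoiCell X x)
    (hzX : infDist z X ≤ δ) : dist z x ≤ δ :=
  infDist_eq_dist_of_mem_voronoiCell hx hz ▸ hzX

end Voronoi

theorem neighbor_of_boundary_cell_close_to_boundary_general
    {d : ℕ} (K X : Set (EuclideanSpace ℝ (Fin d)))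
    (δ : ℝ) (hδ : 0 < δ)
    (hdense : ∀ y : EuclideanSpace ℝ (Fin d),
      infDist y (frontier K) ≤ 3 * δ → infDist y X ≤ δ) :
    ∀ x ∈ X, ∀ x' ∈ X,
      (voronoiCell X x ∩ frontier K).Nonempty →
      (voronoiCell X x ∩ voronoiCell X x').Nonempty →
      infDist x' (frontier K) ≤ 3 * δ := by
  rintro x hx x' - ⟨p, hp_cell, hpK⟩ ⟨z, hz_cell, hz_cell'⟩
  have hnear : ∀ w, dist w p ≤ 3 * δ → infDist w X ≤ δ := fun w hw =>
    hdense w ((infDist_le_dist_of_mem hpK).trans hw)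
  have hpx : dist p x ≤ δ :=
    dist_le_of_mem_voronoiCell hx hp_cell (hnear p (by rw [dist_self]; positivity))
  have hzp : dist z p ≤ 2 * δ := dist_le_two_mul_of_forall_infDist_le hδ hnear hpx
    (infDist_eq_dist_of_mem_voronoiCell hx hz_cell).ge
  have hzx : dist z x ≤ δ := dist_le_of_mem_voronoiCell hx hz_cell (hnear z (by linarith))
  calc infDist x' (frontier K) ≤ dist x' p := infDist_le_dist_of_mem hpK
    _ ≤ dist z x' + dist z p := dist_triangle_left x' p z
    _ ≤ dist z x + dist z p := by gcongr; exact hz_cell' x hx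
    _ ≤ 3 * δ := by linarith

theorem neighbor_of_boundary_cell_close_to_boundary
    {d : ℕ} (K X : Set (EuclideanSpace ℝ (Fin d)))
    (hKcp : IsCompact K) (hKcv : Convex ℝ K)
    (hXlf : ∀ C : Set (EuclideanSpace ℝ (Fin d)), IsCompact C → (X ∩ C).Finite)
    (δ : ℝ) (hδ : 0 < δ)
    (hdense : ∀ y : EuclideanSpace ℝ (Fin d),
      infDist y (frontier K) ≤ 3 * δ → infDist y X ≤ δ) :
    ∀ x ∈ X, ∀ x' ∈ X,
      (voronoiCell X x ∩ frontier K).Nonempty →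
      (voronoiCell X x ∩ voronoiCell X x').Nonempty →
      infDist x' (frontier K) ≤ 3 * δ :=
  neighbor_of_boundary_cell_close_to_boundary_general K X δ hδ hdense
end

section
/- Let X ⊆ ℝ^d be a nonempty locally finite set, let K ⊆ ℝ^d be a set, and let R′ > 0 be such that for every z ∈ K the Voronoi cell of z with respect to X ∪ {z} is contained in the closed ball of radius R′ centered at the origin. Then for every locally finite set D ⊆ ℝ^d with D ∩ B(0, 3R′) = ∅ (where B(0,3R′) is the closed ball of radius 3R′ centered at the origin), one has v_{X∪D}(K) = v_X(K). -/
open Metric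

/-- The Voronoi approximation of `A` with respect to `X`: the union of all
Voronoi cells with nucleus in `A`. -/
def voronoiApprox {d : ℕ} (X A : Set (EuclideanSpace ℝ (Fin d))) :
    Set (EuclideanSpace ℝ (Fin d)) :=
  ⋃ x ∈ X ∩ A, voronoiCell X x

/-!
A point of `K` lies in its own cell, so `K ⊆ B(0, R')`, and for `x ∈ X ∩ K` the cell
`v_X(x) = v_{X ∪ {x}}(x)` lies in `B(0, R')` as well. A point `w` of that cell is within `2R'`
of `x` but more than `2R'` from every point of `D`, which lies outside `B(0, 3R')`; hence adding
`D` changes neither the nuclei in `K` nor their cells.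
-/

section Voronoi

variable {d : ℕ}

theorem self_mem_voronoiCell (X : Set (EuclideanSpace ℝ (Fin d)))
    (x : EuclideanSpace ℝ (Fin d)) : x ∈ voronoiCell X x := by
  intro y _
  simp

theorem voronoiCell_union (X D : Set (EuclideanSpace ℝ (Fin d)))
    (x : EuclideanSpace ℝ (Fin d)) :
    voronoiCell (X ∪ D) x = voronoiCell X x ∩ voronoiCell D x := by
  ext z
  simp only [voronoiCell, Set.mem_ofPred_eq, Set.mem_inter_iff, Set.mem_union, or_imp, forall_and]

theorem voronoiCell_union_singleton_self (X : Set (EuclideanSpace ℝ (Fin d)))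
    (x : EuclideanSpace ℝ (Fin d)) : voronoiCell (X ∪ {x}) x = voronoiCell X x := by
  ext z
  simp [voronoiCell]

theorem closedBall_subset_voronoiCell {D : Set (EuclideanSpace ℝ (Fin d))}
    {x c : EuclideanSpace ℝ (Fin d)} {r : ℝ} (hx : x ∈ closedBall c r)
    (hD : Disjoint D (closedBall c (3 * r))) : closedBall c r ⊆ voronoiCell D x := by
  intro w hw y hy
  have hyc : 3 * r < dist y c := not_le.1 fun h => Set.disjoint_left.1 hD hy (mem_closedBall.2 h)
  rw [mem_closedBall] at hx hw
  have hwx : dist w x ≤ dist w c + dist x c := dist_triangle_right w x c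
  have hyw : dist y c ≤ dist y w + dist w c := dist_triangle y w c
  rw [dist_comm y w] at hyw
  linarith

theorem voronoiApprox_union_of_disjoint {X D A : Set (EuclideanSpace ℝ (Fin d))}
    (hDA : Disjoint D A) (hcell : ∀ x ∈ X ∩ A, voronoiCell X x ⊆ voronoiCell D x) :
    voronoiApprox (X ∪ D) A = voronoiApprox X A := by
  have hnuclei : (X ∪ D) ∩ A = X ∩ A := by
    rw [Set.union_inter_distrib_right, hDA.inter_eq, Set.union_empty]
  unfold voronoiApprox
  rw [hnuclei]
  refine Set.iUnion₂_congr fun x hx => ?_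
  rw [voronoiCell_union, Set.inter_eq_left.2 (hcell x hx)]

end Voronoi

theorem voronoiApprox_union_far_points_general
    {d : ℕ} (X K : Set (EuclideanSpace ℝ (Fin d)))
    (R' : ℝ)
    (hRinf : ∀ z ∈ K, voronoiCell (X ∪ {z}) z ⊆ closedBall (0 : EuclideanSpace ℝ (Fin d)) R')
    (D : Set (EuclideanSpace ℝ (Fin d)))
    (hDfar : D ∩ closedBall (0 : EuclideanSpace ℝ (Fin d)) (3 * R') = ∅) :
    voronoiApprox (X ∪ D) K = voronoiApprox X K := by
  have hK : ∀ z ∈ K, z ∈ closedBall (0 : EuclideanSpace ℝ (Fin d)) R' := fun z hz =>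
    hRinf z hz (self_mem_voronoiCell _ z)
  have hD : Disjoint D (closedBall 0 (3 * R')) := Set.disjoint_iff_inter_eq_empty.2 hDfar
  refine voronoiApprox_union_of_disjoint ?_ fun x ⟨_, hxK⟩ => ?_
  · refine Set.disjoint_right.2 fun z hzK hzD => Set.disjoint_left.1 hD hzD ?_
    have hz := mem_closedBall.1 (hK z hzK)
    exact mem_closedBall.2 (by linarith [dist_nonneg (x := z) (y := 0)])
  · rw [← voronoiCell_union_singleton_self X x]
    exact (hRinf x hxK).trans (closedBall_subset_voronoiCell (hK x hxK) hD)

theorem voronoiApprox_union_far_points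
    {d : ℕ} (X K : Set (EuclideanSpace ℝ (Fin d)))
    (hXne : X.Nonempty)
    (hXlf : ∀ C : Set (EuclideanSpace ℝ (Fin d)), IsCompact C → (X ∩ C).Finite)
    (R' : ℝ) (hR' : 0 < R')
    (hRinf : ∀ z ∈ K, voronoiCell (X ∪ {z}) z ⊆ closedBall (0 : EuclideanSpace ℝ (Fin d)) R')
    (D : Set (EuclideanSpace ℝ (Fin d)))
    (hDlf : ∀ C : Set (EuclideanSpace ℝ (Fin d)), IsCompact C → (D ∩ C).Finite)
    (hDfar : D ∩ closedBall (0 : EuclideanSpace ℝ (Fin d)) (3 * R') = ∅) :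
    voronoiApprox (X ∪ D) K = voronoiApprox X K :=
  voronoiApprox_union_far_points_general X K R' hRinf D hDfar
end

section
/- Let X ⊆ ℝ^d be a locally finite set, let x ∈ X be such that X ∖ {x} is nonempty, and let K ⊆ ℝ^d be any set. Then the symmetric difference satisfies v_X(K) △ v_{X∖{x}}(K) ⊆ v_X(x). In particular, for the Lebesgue measure V, |V(v_{X∖{x}}(K)) − V(v_X(K))| ≤ V(v_X(x)) and |V(v_{X∖{x}}(K) △ K) − V(v_X(K) △ K)| ≤ V(v_X(x)) whenever these measures are finite. -/
/-!
If removing the nucleus `x` loses a point `z` from the approximation of `K`, the only nucleus in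
`K` whose `X`-cell contains `z` must have been `x`, since cells only grow when nuclei are removed.
If `z` is gained, its new nucleus `y` was beaten by some point of `X` that is no longer present,
i.e. by `x`, and then `x` is at least as close to `z` as any point of `X`. The two volume bounds
follow because `(A ∆ K) ∆ (B ∆ K) = A ∆ B`.
-/

open Metric MeasureTheory

theorem abs_toReal_measure_sub_le_of_symmDiff_subset {α : Type*} [MeasurableSpace α]
    {μ : Measure α} {s t u : Set α} (h : symmDiff s t ⊆ u)
    (hs : μ s ≠ ⊤) (ht : μ t ≠ ⊤) (hu : μ u ≠ ⊤) :
    |(μ t).toReal - (μ s).toReal| ≤ (μ u).toReal := by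
  have le_add : ∀ {a b : Set α}, symmDiff a b ⊆ u → μ a ≤ μ b + μ u := fun hab =>
    tsub_le_iff_left.1 (le_measure_symmDiff.trans (measure_mono hab))
  have hst := ENNReal.toReal_mono (ENNReal.add_ne_top.2 ⟨ht, hu⟩) (le_add h)
  have hts := ENNReal.toReal_mono (ENNReal.add_ne_top.2 ⟨hs, hu⟩)
    (le_add (symmDiff_comm s t ▸ h))
  rw [ENNReal.toReal_add ht hu] at hst
  rw [ENNReal.toReal_add hs hu] at hts
  exact abs_sub_le_iff.2 ⟨by linarith, by linarith⟩

section Voronoi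

variable {d : ℕ} {X K : Set (EuclideanSpace ℝ (Fin d))} {x y : EuclideanSpace ℝ (Fin d)}

theorem mem_voronoiApprox {z : EuclideanSpace ℝ (Fin d)} :
    z ∈ voronoiApprox X K ↔ ∃ y ∈ X ∩ K, z ∈ voronoiCell X y := by
  simp only [voronoiApprox, Set.mem_iUnion, exists_prop]

theorem voronoiCell_anti {Y : Set (EuclideanSpace ℝ (Fin d))} (hYX : Y ⊆ X) :
    voronoiCell X y ⊆ voronoiCell Y y :=
  fun _ hz w hw => hz w (hYX hw)

theorem voronoiCell_diff_singleton_sdiff_subset :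
    voronoiCell (X \ {x}) y \ voronoiCell X y ⊆ voronoiCell X x := by
  rintro z ⟨hzy, hzy'⟩
  have hxy : dist z x < dist z y := by
    simp only [voronoiCell, Set.mem_ofPred_eq, not_forall, not_le, exists_prop] at hzy'
    obtain ⟨w, hwX, hw⟩ := hzy'
    by_cases hwx : w = x
    · exact hwx ▸ hw
    · exact absurd (hzy w ⟨hwX, hwx⟩) hw.not_ge
  intro w hwX
  by_cases hwx : w = x
  · rw [hwx]
  · exact hxy.le.trans (hzy w ⟨hwX, hwx⟩)

theorem voronoiApprox_sdiff_voronoiApprox_diff_singleton_subset :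
    voronoiApprox X K \ voronoiApprox (X \ {x}) K ⊆ voronoiCell X x := by
  rintro z ⟨hz, hz'⟩
  obtain ⟨y, ⟨hyX, hyK⟩, hzy⟩ := mem_voronoiApprox.1 hz
  by_cases hyx : y = x
  · exact hyx ▸ hzy
  · exact (hz' (mem_voronoiApprox.2 ⟨y, ⟨⟨hyX, hyx⟩, hyK⟩, voronoiCell_anti Set.sdiff_subset hzy⟩)).elim

theorem voronoiApprox_diff_singleton_sdiff_voronoiApprox_subset :
    voronoiApprox (X \ {x}) K \ voronoiApprox X K ⊆ voronoiCell X x := by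
  rintro z ⟨hz', hz⟩
  obtain ⟨y, ⟨⟨hyX, -⟩, hyK⟩, hzy⟩ := mem_voronoiApprox.1 hz'
  exact voronoiCell_diff_singleton_sdiff_subset
    ⟨hzy, fun hzy' => hz (mem_voronoiApprox.2 ⟨y, ⟨hyX, hyK⟩, hzy'⟩)⟩

theorem symmDiff_voronoiApprox_diff_singleton_subset :
    symmDiff (voronoiApprox X K) (voronoiApprox (X \ {x}) K) ⊆ voronoiCell X x :=
  Set.union_subset voronoiApprox_sdiff_voronoiApprox_diff_singleton_subset
    voronoiApprox_diff_singleton_sdiff_voronoiApprox_subset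

end Voronoi

theorem voronoiApprox_symmDiff_remove_point_subset_cell_general
    {d : ℕ} (X K : Set (EuclideanSpace ℝ (Fin d)))
    (x : EuclideanSpace ℝ (Fin d)) :
    symmDiff (voronoiApprox X K) (voronoiApprox (X \ {x}) K) ⊆ voronoiCell X x ∧
    (volume (voronoiApprox X K) ≠ ⊤ → volume (voronoiApprox (X \ {x}) K) ≠ ⊤ →
      volume (voronoiCell X x) ≠ ⊤ →
      |(volume (voronoiApprox (X \ {x}) K)).toReal - (volume (voronoiApprox X K)).toReal|
        ≤ (volume (voronoiCell X x)).toReal) ∧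
    (volume (symmDiff (voronoiApprox X K) K) ≠ ⊤ →
      volume (symmDiff (voronoiApprox (X \ {x}) K) K) ≠ ⊤ →
      volume (voronoiCell X x) ≠ ⊤ →
      |(volume (symmDiff (voronoiApprox (X \ {x}) K) K)).toReal
          - (volume (symmDiff (voronoiApprox X K) K)).toReal|
        ≤ (volume (voronoiCell X x)).toReal) := by
  have hsub := symmDiff_voronoiApprox_diff_singleton_subset (X := X) (K := K) (x := x)
  have hsub' : symmDiff (symmDiff (voronoiApprox X K) K) (symmDiff (voronoiApprox (X \ {x}) K) K)
      ⊆ voronoiCell X x := by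
    rwa [symmDiff_symmDiff_symmDiff_comm, symmDiff_self, symmDiff_bot]
  exact ⟨hsub, abs_toReal_measure_sub_le_of_symmDiff_subset hsub,
    abs_toReal_measure_sub_le_of_symmDiff_subset hsub'⟩

theorem voronoiApprox_symmDiff_remove_point_subset_cell
    {d : ℕ} (X K : Set (EuclideanSpace ℝ (Fin d)))
    (hXlf : ∀ C : Set (EuclideanSpace ℝ (Fin d)), IsCompact C → (X ∩ C).Finite)
    (x : EuclideanSpace ℝ (Fin d)) (hx : x ∈ X)
    (hXx : (X \ {x}).Nonempty) :
    symmDiff (voronoiApprox X K) (voronoiApprox (X \ {x}) K) ⊆ voronoiCell X x ∧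
    (volume (voronoiApprox X K) ≠ ⊤ → volume (voronoiApprox (X \ {x}) K) ≠ ⊤ →
      volume (voronoiCell X x) ≠ ⊤ →
      |(volume (voronoiApprox (X \ {x}) K)).toReal - (volume (voronoiApprox X K)).toReal|
        ≤ (volume (voronoiCell X x)).toReal) ∧
    (volume (symmDiff (voronoiApprox X K) K) ≠ ⊤ →
      volume (symmDiff (voronoiApprox (X \ {x}) K) K) ≠ ⊤ →
      volume (voronoiCell X x) ≠ ⊤ →
      |(volume (symmDiff (voronoiApprox (X \ {x}) K) K)).toReal
          - (volume (symmDiff (voronoiApprox X K) K)).toReal|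
        ≤ (volume (voronoiCell X x)).toReal) :=
  voronoiApprox_symmDiff_remove_point_subset_cell_general X K x
end

section
/- Let X ⊆ ℝ^d be a locally finite set, let x ∈ X, and let y ∈ X ∖ {x}. If v_{X∖{x}}(y) ∩ v_X(x) ≠ ∅, then v_X(y) ∩ v_X(x) ≠ ∅. -/
/-!
Take `z` in both cells and walk from `z` towards `y`. The difference `dist · x - dist · y` is
`≤ 0` at `z` and `≥ 0` at `y`, so some `u` on the segment `[z, y]` is equidistant from `x` and `y`.
Moving towards the nucleus along a segment keeps a point in the nucleus' cell, so `u` stays in the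
cell of `y` for `X \ {x}`; being equidistant from `x` and `y`, it then lies in both cells for `X`.
-/

open Metric

section Segment

variable {E : Type*} [NormedAddCommGroup E] [NormedSpace ℝ E]

theorem exists_mem_segment_dist_eq {x y z : E} (h : dist z x ≤ dist z y) :
    ∃ u ∈ segment ℝ z y, dist u x = dist u y :=
  (convex_segment z y).isPreconnected.intermediate_value₂ (left_mem_segment ℝ z y)
    (right_mem_segment ℝ z y) (continuous_id.dist continuous_const).continuousOn
    (continuous_id.dist continuous_const).continuousOn h (by simp)

theorem dist_le_dist_of_mem_segment {u w y z : E} (hu : u ∈ segment ℝ z y)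
    (h : dist z y ≤ dist z w) : dist u y ≤ dist u w := by
  have hzy := dist_add_dist_of_mem_segment hu
  linarith [dist_triangle z u w]

end Segment

section Voronoi

variable {d : ℕ} {X : Set (EuclideanSpace ℝ (Fin d))} {u x y z : EuclideanSpace ℝ (Fin d)}

theorem segment_subset_voronoiCell (hz : z ∈ voronoiCell X y) :
    segment ℝ z y ⊆ voronoiCell X y :=
  fun _ hu w hw => dist_le_dist_of_mem_segment hu (hz w hw)

theorem mem_voronoiCell_of_mem_voronoiCell_diff_singleton (hu : u ∈ voronoiCell (X \ {x}) y)
    (hux : dist u y ≤ dist u x) : u ∈ voronoiCell X y := by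
  intro w hw
  by_cases hwx : w = x
  · exact hwx ▸ hux
  · exact hu w ⟨hw, hwx⟩

theorem mem_voronoiCell_of_dist_eq (hu : u ∈ voronoiCell X y) (hux : dist u x = dist u y) :
    u ∈ voronoiCell X x :=
  fun w hw => hux ▸ hu w hw

end Voronoi

theorem voronoiCell_remove_meets_imp_meets_general
    {d : ℕ} (X : Set (EuclideanSpace ℝ (Fin d)))
    (x : EuclideanSpace ℝ (Fin d))
    (y : EuclideanSpace ℝ (Fin d)) (hy : y ∈ X \ {x})
    (h : (voronoiCell (X \ {x}) y ∩ voronoiCell X x).Nonempty) :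
    (voronoiCell X y ∩ voronoiCell X x).Nonempty := by
  obtain ⟨z, hzy, hzx⟩ := h
  obtain ⟨u, hu, hux⟩ := exists_mem_segment_dist_eq (hzx y hy.1)
  have huy : u ∈ voronoiCell X y :=
    mem_voronoiCell_of_mem_voronoiCell_diff_singleton (segment_subset_voronoiCell hzy hu) hux.ge
  exact ⟨u, huy, mem_voronoiCell_of_dist_eq huy hux⟩

theorem voronoiCell_remove_meets_imp_meets
    {d : ℕ} (X : Set (EuclideanSpace ℝ (Fin d)))
    (hXlf : ∀ C : Set (EuclideanSpace ℝ (Fin d)), IsCompact C → (X ∩ C).Finite)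
    (x : EuclideanSpace ℝ (Fin d)) (hx : x ∈ X)
    (y : EuclideanSpace ℝ (Fin d)) (hy : y ∈ X \ {x})
    (h : (voronoiCell (X \ {x}) y ∩ voronoiCell X x).Nonempty) :
    (voronoiCell X y ∩ voronoiCell X x).Nonempty :=
  voronoiCell_remove_meets_imp_meets_general X x y hy h
end

section
/- Let d ≥ 1 be an integer and let a > 0 and l > 0 be real numbers. Then ∫_{ℝ∖[0,l]} ∫_0^l e^{−a|x−y|^d} |x−y|^{d−1} dy dx = (2/d) a^{−1} ∫_0^l e^{−a y^d} dy = (2/d²) a^{−1−1/d} ∫_0^{a l^d} e^{−s} s^{1/d − 1} ds. -/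
/-!
With `φ t = exp (-(a * t ^ d))`, the function `-(a * d)⁻¹ * φ` is an antiderivative of
`φ t * t ^ (d - 1)`, and for `x ∉ [0, l]` the distance `|x - y|` is affine in `y ∈ [0, l]`,
so the inner integral is `(a * d)⁻¹ * (φ r - φ R)`, with `r` and `R` the distances from `x` to
the near and the far endpoint.
Writing `x = -t` on the left and `x = l + t` on the right, both half-lines contribute
`(a * d)⁻¹ * ∫_{t > 0} (φ t - φ (t + l))`, which telescopes to `(a * d)⁻¹ * ∫_0^l φ`.
The second closed form is the substitution `s = a * y ^ d`.
-/

open MeasureTheory Real Set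

section Translation

variable {E : Type*} [NormedAddCommGroup E]

theorem integral_Ioi_comp_add_right [NormedSpace ℝ E] (g : ℝ → E) (c l : ℝ) :
    ∫ t in Ioi c, g (t + l) = ∫ t in Ioi (c + l), g t := by
  simpa using (measurePreserving_add_right volume l).setIntegral_preimage_emb
    (measurableEmbedding_addRight l) g (Ioi (c + l))

theorem integrableOn_Ioi_comp_add_right_iff (g : ℝ → E) (c l : ℝ) :
    IntegrableOn (fun t => g (t + l)) (Ioi c) ↔ IntegrableOn g (Ioi (c + l)) := by
  simpa [Function.comp_def] using
    (measurePreserving_add_right volume l).integrableOn_comp_preimage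
      (measurableEmbedding_addRight l) (f := g) (s := Ioi (c + l))

theorem MeasureTheory.IntegrableOn.comp_add_right_Ioi {g : ℝ → E} (hg : IntegrableOn g (Ioi 0))
    {l : ℝ} (hl : 0 ≤ l) : IntegrableOn (fun t => g (t + l)) (Ioi 0) :=
  (integrableOn_Ioi_comp_add_right_iff g 0 l).2 <| by
    rw [zero_add]
    exact hg.mono_set (Ioi_subset_Ioi hl)

theorem integrableOn_Iio_of_comp_neg {g : ℝ → E} {c : ℝ}
    (hg : IntegrableOn (fun t => g (-t)) (Ioi c)) : IntegrableOn g (Iio (-c)) := by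
  refine ((Measure.measurePreserving_neg volume).integrableOn_comp_preimage
    (Homeomorph.neg ℝ).measurableEmbedding).1 ?_
  simpa [Function.comp_def] using hg

theorem setIntegral_compl_Icc [NormedSpace ℝ E] {l : ℝ} (hl : 0 ≤ l) {G : ℝ → E}
    (hG_neg : IntegrableOn (fun t => G (-t)) (Ioi 0))
    (hG_add : IntegrableOn (fun t => G (t + l)) (Ioi 0)) :
    ∫ x in (Icc 0 l)ᶜ, G x = (∫ t in Ioi 0, G (-t)) + ∫ t in Ioi 0, G (t + l) := by
  have hcompl : (Icc 0 l)ᶜ = Iio 0 ∪ Ioi l := by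
    ext x
    simp only [mem_compl_iff, mem_Icc, not_and_or, not_le, mem_union, mem_Iio, mem_Ioi]
  have hG_Iio : IntegrableOn G (Iio 0) := by simpa using integrableOn_Iio_of_comp_neg hG_neg
  have hG_Ioi : IntegrableOn G (Ioi l) := by
    simpa using (integrableOn_Ioi_comp_add_right_iff G 0 l).1 hG_add
  rw [hcompl, setIntegral_union (Iio_disjoint_Ioi_of_le hl) measurableSet_Ioi hG_Iio hG_Ioi,
    integral_comp_neg_Ioi, neg_zero, integral_Iic_eq_integral_Iio, integral_Ioi_comp_add_right,
    zero_add]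

theorem integral_Ioi_sub_comp_add_right [NormedSpace ℝ E] {g : ℝ → E}
    (hg : IntegrableOn g (Ioi 0)) {l : ℝ} (hl : 0 ≤ l) :
    ∫ t in Ioi 0, (g t - g (t + l)) = ∫ t in Ioc 0 l, g t := by
  have hg_l : IntegrableOn g (Ioi l) := hg.mono_set (Ioi_subset_Ioi hl)
  rw [integral_sub hg (hg.comp_add_right_Ioi hl), integral_Ioi_comp_add_right, zero_add,
    ← Ioc_union_Ioi_eq_Ioi hl, setIntegral_union Ioc_disjoint_Ioi_same measurableSet_Ioi
      (hg.mono_set Ioc_subset_Ioi_self) hg_l, add_sub_cancel_right]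

end Translation

section ExpNegMulPow

variable {a : ℝ} {d : ℕ}

theorem hasDerivAt_exp_neg_mul_pow (a : ℝ) (d : ℕ) (t : ℝ) :
    HasDerivAt (fun t => exp (-(a * t ^ d)))
      (-(a * d) * (exp (-(a * t ^ d)) * t ^ (d - 1))) t :=
  (((hasDerivAt_pow d t).const_mul a).neg).exp.congr_deriv (by simp only [Pi.neg_apply]; ring)

theorem integral_exp_neg_mul_pow_mul_pow_pred (ha : a ≠ 0) (hd : d ≠ 0) (u v : ℝ) :
    ∫ t in u..v, exp (-(a * t ^ d)) * t ^ (d - 1)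
      = (a * d)⁻¹ * (exp (-(a * u ^ d)) - exp (-(a * v ^ d))) := by
  have hF : ∀ t, HasDerivAt (fun t => -(a * d)⁻¹ * exp (-(a * t ^ d)))
      (exp (-(a * t ^ d)) * t ^ (d - 1)) t := by
    intro t
    refine ((hasDerivAt_exp_neg_mul_pow a d t).const_mul (-(a * d)⁻¹)).congr_deriv ?_
    have : (a * d : ℝ) ≠ 0 := by positivity
    field_simp
  rw [intervalIntegral.integral_eq_sub_of_hasDerivAt (fun t _ => hF t)
    (Continuous.intervalIntegrable (by fun_prop) u v)]
  ring

theorem setIntegral_Ioc_exp_neg_mul_abs_pow_of_le (ha : a ≠ 0) (hd : d ≠ 0) {l x : ℝ}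
    (hl : 0 ≤ l) (hx : l ≤ x) :
    ∫ y in Ioc 0 l, exp (-(a * |x - y| ^ d)) * |x - y| ^ (d - 1)
      = (a * d)⁻¹ * (exp (-(a * (x - l) ^ d)) - exp (-(a * x ^ d))) := by
  have habs : EqOn (fun y => exp (-(a * |x - y| ^ d)) * |x - y| ^ (d - 1))
      (fun y => exp (-(a * (x - y) ^ d)) * (x - y) ^ (d - 1)) (uIcc 0 l) := by
    intro y hy
    rw [uIcc_of_le hl] at hy
    simp only [abs_of_nonneg (sub_nonneg.2 (hy.2.trans hx))]
  rw [← intervalIntegral.integral_of_le hl, intervalIntegral.integral_congr habs,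
    intervalIntegral.integral_comp_sub_left (fun t => exp (-(a * t ^ d)) * t ^ (d - 1)),
    sub_zero, integral_exp_neg_mul_pow_mul_pow_pred ha hd]

theorem setIntegral_Ioc_exp_neg_mul_abs_pow_of_nonpos (ha : a ≠ 0) (hd : d ≠ 0) {l x : ℝ}
    (hl : 0 ≤ l) (hx : x ≤ 0) :
    ∫ y in Ioc 0 l, exp (-(a * |x - y| ^ d)) * |x - y| ^ (d - 1)
      = (a * d)⁻¹ * (exp (-(a * (-x) ^ d)) - exp (-(a * (l - x) ^ d))) := by
  have habs : EqOn (fun y => exp (-(a * |x - y| ^ d)) * |x - y| ^ (d - 1))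
      (fun y => exp (-(a * (y - x) ^ d)) * (y - x) ^ (d - 1)) (uIcc 0 l) := by
    intro y hy
    rw [uIcc_of_le hl] at hy
    simp only [abs_sub_comm x y, abs_of_nonneg (sub_nonneg.2 (hx.trans hy.1))]
  rw [← intervalIntegral.integral_of_le hl, intervalIntegral.integral_congr habs,
    intervalIntegral.integral_comp_sub_right (fun t => exp (-(a * t ^ d)) * t ^ (d - 1)),
    zero_sub, integral_exp_neg_mul_pow_mul_pow_pred ha hd]

theorem integrableOn_Ioi_exp_neg_mul_pow (ha : 0 < a) (hd : d ≠ 0) :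
    IntegrableOn (fun t => exp (-(a * t ^ d))) (Ioi 0) := by
  refine (integrableOn_rpow_mul_exp_neg_mul_rpow (s := 0) (p := d) (by norm_num)
    (by positivity) ha).congr_fun (fun t _ => ?_) measurableSet_Ioi
  simp only [rpow_zero, one_mul, rpow_natCast, neg_mul]

theorem setIntegral_Ioc_exp_neg_mul_rpow (ha : 0 < a) (hd : d ≠ 0) {l : ℝ} (hl : 0 ≤ l) :
    ∫ s in Ioc 0 (a * l ^ d), exp (-s) * s ^ (1 / (d : ℝ) - 1)
      = d * a ^ (1 / (d : ℝ)) * ∫ y in Ioc 0 l, exp (-(a * y ^ d)) := by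
  have hsub := intervalIntegral.integral_comp_mul_deriv_of_deriv_nonneg (a := 0) (b := l)
    (f := fun y => a * y ^ d) (f' := fun y => a * (d * y ^ (d - 1)))
    (g := fun s => exp (-s) * s ^ (1 / (d : ℝ) - 1)) (by fun_prop)
    (fun y _ => (hasDerivAt_pow d y).const_mul a) (fun y hy => by
      simp only [min_eq_left hl, max_eq_right hl] at hy
      have := hy.1
      positivity)
  simp only [zero_pow hd, mul_zero] at hsub
  -- for `d > 1` the two integrands differ at `y = 0`, so compare them on `Ioc 0 l` only
  rw [← intervalIntegral.integral_of_le (by positivity), ← hsub,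
    intervalIntegral.integral_of_le hl, ← integral_const_mul]
  refine setIntegral_congr_fun measurableSet_Ioc fun y hy => ?_
  have hy₀ : 0 < y := hy.1
  have hroot : (a * y ^ d) ^ (1 / (d : ℝ)) = a ^ (1 / (d : ℝ)) * y := by
    rw [mul_rpow ha.le (by positivity), one_div, pow_rpow_inv_natCast hy₀.le hd]
  simp only [Function.comp_apply]
  rw [rpow_sub_one (by positivity), hroot]
  field_simp
  exact mul_pow_sub_one hd y

theorem integral_compl_Icc_setIntegral_Ioc_exp_neg_mul_abs_pow (ha : 0 < a) (hd : d ≠ 0)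
    {l : ℝ} (hl : 0 ≤ l) :
    ∫ x in (Icc 0 l)ᶜ, ∫ y in Ioc 0 l, exp (-(a * |x - y| ^ d)) * |x - y| ^ (d - 1)
      = 2 / d * a⁻¹ * ∫ y in Ioc 0 l, exp (-(a * y ^ d)) := by
  set g : ℝ → ℝ := fun t => exp (-(a * t ^ d))
  have hg : IntegrableOn g (Ioi 0) := integrableOn_Ioi_exp_neg_mul_pow ha hd
  have hdiff : IntegrableOn (fun t => (a * d)⁻¹ * (g t - g (t + l))) (Ioi 0) :=
    (hg.sub (hg.comp_add_right_Ioi hl)).const_mul _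
  have h_neg : EqOn (fun t => ∫ y in Ioc 0 l, exp (-(a * |-t - y| ^ d)) * |-t - y| ^ (d - 1))
      (fun t => (a * d)⁻¹ * (g t - g (t + l))) (Ioi 0) := by
    intro t ht
    simp only [setIntegral_Ioc_exp_neg_mul_abs_pow_of_nonpos ha.ne' hd hl (neg_nonpos.2 ht.le),
      neg_neg, sub_neg_eq_add, add_comm l, g]
  have h_add : EqOn
      (fun t => ∫ y in Ioc 0 l, exp (-(a * |t + l - y| ^ d)) * |t + l - y| ^ (d - 1))
      (fun t => (a * d)⁻¹ * (g t - g (t + l))) (Ioi 0) := by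
    intro t ht
    simp only [setIntegral_Ioc_exp_neg_mul_abs_pow_of_le ha.ne' hd hl
      (le_add_of_nonneg_left ht.le), add_sub_cancel_right, g]
  rw [setIntegral_compl_Icc hl (hdiff.congr_fun h_neg.symm measurableSet_Ioi)
      (hdiff.congr_fun h_add.symm measurableSet_Ioi),
    setIntegral_congr_fun measurableSet_Ioi h_neg, setIntegral_congr_fun measurableSet_Ioi h_add,
    integral_const_mul, integral_Ioi_sub_comp_add_right hg hl]
  field_simp
  ring

end ExpNegMulPow

theorem exp_chord_integral_eval
    (d : ℕ) (hd : 1 ≤ d) (a l : ℝ) (ha : 0 < a) (hl : 0 < l) :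
    (∫ x in (Set.Icc (0:ℝ) l)ᶜ, ∫ y in Set.Ioc (0:ℝ) l,
        Real.exp (-(a * |x - y| ^ d)) * |x - y| ^ (d - 1))
      = 2 / (d : ℝ) * a⁻¹ * ∫ y in Set.Ioc (0:ℝ) l, Real.exp (-(a * y ^ d)) ∧
    (∫ x in (Set.Icc (0:ℝ) l)ᶜ, ∫ y in Set.Ioc (0:ℝ) l,
        Real.exp (-(a * |x - y| ^ d)) * |x - y| ^ (d - 1))
      = 2 / (d : ℝ) ^ 2 * a ^ (-1 - 1 / (d : ℝ))
          * ∫ s in Set.Ioc (0:ℝ) (a * l ^ d), Real.exp (-s) * s ^ (1 / (d : ℝ) - 1) := by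
  have hd₀ : d ≠ 0 := Nat.one_le_iff_ne_zero.mp hd
  have h := integral_compl_Icc_setIntegral_Ioc_exp_neg_mul_abs_pow ha hd₀ hl.le
  refine ⟨h, h.trans ?_⟩
  have hpow : a ^ (-1 - 1 / (d : ℝ)) * a ^ (1 / (d : ℝ)) = a⁻¹ := by
    rw [← rpow_add ha, sub_add_cancel, rpow_neg_one]
  rw [setIntegral_Ioc_exp_neg_mul_rpow ha hd₀ hl.le]
  rw [← hpow]
  field_simp
end

section
/- Let c be a real number with 0 < c ≤ 1 and let a ≥ 0. Then ∫_a^∞ e^{−s} s^{c−1} ds ≤ Γ(c) · e^{−a}, where Γ(c) = ∫_0^∞ e^{−s} s^{c−1} ds is the Gamma function. -/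
open MeasureTheory Real

theorem setIntegral_Ioi_eq_setIntegral_Ioi_zero_comp_add {E : Type*} [NormedAddCommGroup E]
    [NormedSpace ℝ E] (f : ℝ → E) (a : ℝ) :
    ∫ s in Set.Ioi a, f s = ∫ t in Set.Ioi 0, f (t + a) := by
  have hpre : (· + a) ⁻¹' Set.Ioi a = Set.Ioi 0 := by ext; simp
  rw [← (measurePreserving_add_right volume a).setIntegral_preimage_emb
    (MeasurableEquiv.addRight a).measurableEmbedding, hpre]

theorem exp_neg_add_mul_rpow_le {t a c : ℝ} (ht : 0 < t) (ha : 0 ≤ a) (hc : c ≤ 1) :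
    exp (-(t + a)) * (t + a) ^ (c - 1) ≤ exp (-a) * (exp (-t) * t ^ (c - 1)) := by
  have hpow : (t + a) ^ (c - 1) ≤ t ^ (c - 1) :=
    rpow_le_rpow_of_nonpos ht (by linarith) (by linarith)
  calc exp (-(t + a)) * (t + a) ^ (c - 1) = exp (-a) * (exp (-t) * (t + a) ^ (c - 1)) := by
        rw [← mul_assoc, ← exp_add]; ring_nf
    _ ≤ exp (-a) * (exp (-t) * t ^ (c - 1)) := by gcongr

theorem integral_exp_rpow_tail_le_Gamma_mul_exp
    (c : ℝ) (hc0 : 0 < c) (hc1 : c ≤ 1) (a : ℝ) (ha : 0 ≤ a) :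
    (∫ s in Set.Ioi a, Real.exp (-s) * s ^ (c - 1)) ≤ Real.Gamma c * Real.exp (-a) := by
  rw [setIntegral_Ioi_eq_setIntegral_Ioi_zero_comp_add, Gamma_eq_integral hc0, mul_comm,
    ← integral_const_mul]
  refine setIntegral_mono_of_nonneg (fun t ht => ?_) (fun t ht => ?_)
    ((GammaIntegral_convergent hc0).const_mul _)
  · have : 0 < t + a := by linarith [Set.mem_Ioi.mp ht]
    positivity
  · exact exp_neg_add_mul_rpow_le ht ha hc1
end

section
/- Let K ⊆ ℝ^d be a compact convex set and r > 0 with r·B^d ⊆ K, where B^d is the closed unit ball centered at the origin. Let u, v ∈ ℝ^d be orthogonal unit vectors, let l(y) = vol₁({t ∈ ℝ : y + t·u ∈ K}) denote the chord length in direction u through y, and set ρ = sup{t ≥ 0 : ∃ s ∈ ℝ, t·v + s·u ∈ K}. Then ρ is finite and positive, and for every t with 0 ≤ t ≤ ρ one has l(t·v) ≥ 2r (1 − t/ρ). -/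
open MeasureTheory Metric

/-!
Let `p = ρ • v + s₀ • u` be a point of `K` realizing `ρ`; it exists because the set of admissible
`t` is compact. For `t = c * ρ` with `0 ≤ c < 1`, the homothety with centre `p` and ratio `1 - c`
maps the segment `[-r • u, r • u] ⊆ K` into `K ∩ (t • v + ℝ • u)`, giving a chord of length at
least `2 * r * (1 - c)`.
-/

theorem Convex.smul_add_smul_mem_of_abs_le {E : Type*} [AddCommGroup E] [Module ℝ E]
    {K : Set E} (hK : Convex ℝ K) {u p : E} {r c τ : ℝ}
    (hu : ∀ σ : ℝ, |σ| ≤ r → σ • u ∈ K) (hp : p ∈ K) (hc₀ : 0 ≤ c) (hc₁ : c < 1)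
    (hτ : |τ| ≤ (1 - c) * r) : c • p + τ • u ∈ K := by
  have hc : 0 < 1 - c := sub_pos.mpr hc₁
  have hσ : |τ / (1 - c)| ≤ r := by
    rwa [abs_div, abs_of_pos hc, div_le_iff₀' hc]
  have hcomb : (1 - c) • ((τ / (1 - c)) • u) + c • p = c • p + τ • u := by
    rw [smul_smul, mul_div_cancel₀ _ hc.ne', add_comm]
  simpa only [hcomb] using hK (hu _ hσ) hp hc.le hc₀ (by ring)

theorem Convex.ofReal_le_volume_setOf_add_smul_mem {E : Type*} [AddCommGroup E] [Module ℝ E]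
    {K : Set E} (hK : Convex ℝ K) {u v : E} {r ρ s t : ℝ}
    (hu : ∀ σ : ℝ, |σ| ≤ r → σ • u ∈ K) (hp : ρ • v + s • u ∈ K) (ht₀ : 0 ≤ t) (htρ : t < ρ) :
    ENNReal.ofReal (2 * r * (1 - t / ρ)) ≤ volume {τ : ℝ | t • v + τ • u ∈ K} := by
  have hρ : 0 < ρ := ht₀.trans_lt htρ
  set c := t / ρ
  have hcρ : c * ρ = t := div_mul_cancel₀ t hρ.ne'
  have hIcc : Set.Icc (c * s - (1 - c) * r) (c * s + (1 - c) * r) ⊆ {τ | t • v + τ • u ∈ K} := by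
    intro τ hτ
    have hτ' : |τ - c * s| ≤ (1 - c) * r :=
      abs_sub_le_iff.mpr ⟨by linarith [hτ.2], by linarith [hτ.1]⟩
    have hmem := hK.smul_add_smul_mem_of_abs_le hu hp (div_nonneg ht₀ hρ.le)
      ((div_lt_one hρ).mpr htρ) hτ'
    have hpoint : c • (ρ • v + s • u) + (τ - c * s) • u = t • v + τ • u := by
      rw [smul_add, smul_smul, smul_smul, hcρ, add_assoc, ← add_smul]
      congr 2; ring
    rwa [hpoint] at hmem
  calc ENNReal.ofReal (2 * r * (1 - t / ρ))
      = volume (Set.Icc (c * s - (1 - c) * r) (c * s + (1 - c) * r)) := by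
        rw [Real.volume_Icc]; congr 1; ring
    _ ≤ _ := measure_mono hIcc

theorem IsCompact.setOf_exists_smul_add_smul_mem {E : Type*} [NormedAddCommGroup E]
    [NormedSpace ℝ E] {K : Set E} (hK : IsCompact K) {u v : E}
    (hvu : LinearIndependent ℝ ![v, u]) : IsCompact {t : ℝ | ∃ s : ℝ, t • v + s • u ∈ K} := by
  let f : ℝ × ℝ →ₗ[ℝ] E :=
    (LinearMap.toSpanSingleton ℝ E v).coprod (LinearMap.toSpanSingleton ℝ E u)
  have hf : Topology.IsClosedEmbedding f := LinearMap.isClosedEmbedding_of_injective <|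
    LinearMap.ker_eq_bot'.mpr fun p hp =>
      Prod.ext_iff.mpr (LinearIndependent.pair_iff.mp hvu p.1 p.2 hp)
  convert (hf.isCompact_preimage hK).image continuous_fst using 1
  ext t
  simp [f]

theorem IsCompact.setOf_add_smul_mem {E : Type*} [NormedAddCommGroup E] [NormedSpace ℝ E]
    {K : Set E} (hK : IsCompact K) (y : E) {u : E} (hu : u ≠ 0) :
    IsCompact {τ : ℝ | y + τ • u ∈ K} :=
  (isClosedEmbedding_smul_left hu).isCompact_preimage <|
    (Homeomorph.addLeft y).isCompact_preimage.mpr hK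

theorem chordLength_lower_bound_radial
    {d : ℕ} (K : Set (EuclideanSpace ℝ (Fin d)))
    (hKcp : IsCompact K) (hKcv : Convex ℝ K)
    (r : ℝ) (hr : 0 < r)
    (hrK : closedBall (0 : EuclideanSpace ℝ (Fin d)) r ⊆ K)
    (u v : EuclideanSpace ℝ (Fin d)) (hu : ‖u‖ = 1) (hv : ‖v‖ = 1)
    (huv : (inner ℝ u v : ℝ) = 0) :
    BddAbove {t : ℝ | 0 ≤ t ∧ ∃ s : ℝ, t • v + s • u ∈ K} ∧
    0 < sSup {t : ℝ | 0 ≤ t ∧ ∃ s : ℝ, t • v + s • u ∈ K} ∧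
    ∀ t : ℝ, 0 ≤ t → t ≤ sSup {t : ℝ | 0 ≤ t ∧ ∃ s : ℝ, t • v + s • u ∈ K} →
      2 * r * (1 - t / sSup {t : ℝ | 0 ≤ t ∧ ∃ s : ℝ, t • v + s • u ∈ K})
        ≤ (volume {τ : ℝ | t • v + τ • u ∈ K}).toReal := by
  set S := {t : ℝ | 0 ≤ t ∧ ∃ s : ℝ, t • v + s • u ∈ K}
  have hvu : LinearIndependent ℝ ![v, u] := by
    refine Orthonormal.linearIndependent ?_
    simp [orthonormal_iff_ite, Fin.forall_fin_two, hu, hv, huv, real_inner_comm u v]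
  have hS : IsCompact S := (hKcp.setOf_exists_smul_add_smul_mem hvu).inter_left isClosed_Ici
  have hball : ∀ σ : ℝ, |σ| ≤ r → σ • u ∈ K := fun σ hσ =>
    hrK (by simpa [norm_smul, hu] using hσ)
  have hrS : r ∈ S := ⟨hr.le, 0, hrK (by simp [norm_smul, hv, abs_of_pos hr])⟩
  have hρ : 0 < sSup S := hr.trans_le (le_csSup hS.bddAbove hrS)
  refine ⟨hS.bddAbove, hρ, fun t ht₀ htρ => ?_⟩
  obtain ⟨-, s, hp⟩ := hS.sSup_mem ⟨r, hrS⟩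
  rcases htρ.eq_or_lt with rfl | htρ
  · simp [div_self hρ.ne']
  have hu₀ : u ≠ 0 := by rintro rfl; simp at hu
  have hfin : volume {τ : ℝ | t • v + τ • u ∈ K} ≠ ⊤ :=
    (hKcp.setOf_add_smul_mem (t • v) hu₀).measure_lt_top.ne
  exact (ENNReal.ofReal_le_iff_le_toReal hfin).mp
    (hKcv.ofReal_le_volume_setOf_add_smul_mem hball hp ht₀ htρ)
end

section
/- Let d ≥ 2 be an integer, let K ⊆ ℝ^d be a compact convex set and r > 0 with r·B^d ⊆ K (B^d the closed unit ball centered at the origin), let u ∈ ℝ^d be a unit vector, and let λ > 0. Denote by κ_d the volume of B^d, by π the orthogonal projection of ℝ^d onto the hyperplane u^⊥, and by l(y) = vol₁({t ∈ ℝ : y + t·u ∈ K}) the chord length in direction u. Then ∫_{π(K)} e^{−λ κ_d l(y)^d} dy ≤ ((d−1)/(2d)) (λ κ_d)^{−1/d} Γ(1/d) r^{−1} · vol_{d−1}(π(K)), where the integral and vol_{d−1} are taken with respect to (d−1)-dimensional Lebesgue measure on u^⊥. -/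
/-!
Let `S = π(K)` and let `l` be the chord length. Since `r B^d ⊆ K`, convexity shows that every chord
over a point of `θ • S` has length at least `2r(1 - θ)`; with `θ = 1 - s/(2r)` this puts
`{l < s} ∩ S` inside `S \ θ • S`. As `S` is star-shaped about `0` and `μH[d-1]` scales by
`θ^(d-1)`, Bernoulli's inequality gives `μH[d-1]({l < s} ∩ S) ≤ (d-1) s / (2r) · μH[d-1](S)`.
Writing `exp(-a l^d) = ∫_l^∞ a d s^(d-1) exp(-a s^d) ds` and exchanging the integrals turns this
distribution bound into the claim, since `∫_0^∞ a d s^d exp(-a s^d) ds = a^(-1/d) Γ(1/d) / d`.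
-/

open MeasureTheory Metric

/-- Orthogonal projection of `ℝ^d` onto the hyperplane `u^⊥`, viewed as a map
into the ambient space. -/
noncomputable def projHyperplane {d : ℕ} (u : EuclideanSpace ℝ (Fin d)) :
    EuclideanSpace ℝ (Fin d) → EuclideanSpace ℝ (Fin d) :=
  fun x => (Submodule.orthogonalProjection (Submodule.span ℝ {u})ᗮ x : EuclideanSpace ℝ (Fin d))

open Set Module Real
open scoped ENNReal Pointwise RealInnerProductSpace

section LayerCake

variable {α : Type*} [MeasurableSpace α]

theorem lintegral_setLIntegral_Ioi_eq_lintegral_mul_meas_lt (μ : Measure α) [SFinite μ]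
    {l : α → ℝ} (hl : Measurable l) {F : ℝ → ℝ≥0∞} (hF : Measurable F) :
    ∫⁻ y, (∫⁻ s in Ioi (l y), F s) ∂μ = ∫⁻ s, F s * μ {y | l y < s} := by
  set T : α → ℝ → ℝ≥0∞ := fun y s => {p : α × ℝ | l p.1 < p.2}.indicator (fun p => F p.2) (y, s)
  have hT : Measurable (Function.uncurry T) :=
    (hF.comp measurable_snd).indicator (measurableSet_lt (hl.comp measurable_fst) measurable_snd)
  calc ∫⁻ y, (∫⁻ s in Ioi (l y), F s) ∂μ = ∫⁻ y, (∫⁻ s, T y s) ∂μ := by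
        congr with y
        rw [← lintegral_indicator measurableSet_Ioi]
        rfl
    _ = ∫⁻ s, ∫⁻ y, T y s ∂μ := lintegral_lintegral_swap hT.aemeasurable
    _ = ∫⁻ s, F s * μ {y | l y < s} := by
        congr with s
        exact lintegral_indicator_const (hl measurableSet_Iio) (F s)

end LayerCake

section WeibullTail

variable {a : ℝ} {d : ℕ}

theorem integrableOn_pow_mul_exp_neg_mul_pow (ha : 0 < a) (hd : d ≠ 0) (k : ℕ) :
    IntegrableOn (fun s : ℝ => s ^ k * exp (-(a * s ^ d))) (Ioi 0) := by
  refine (integrableOn_rpow_mul_exp_neg_mul_rpow (s := k) (p := d)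
    (neg_one_lt_zero.trans_le k.cast_nonneg) (by positivity) ha).congr_fun
    (fun s _ => ?_) measurableSet_Ioi
  simp only [rpow_natCast, neg_mul]

theorem integrableOn_Ioi_mul_pow_mul_exp_neg_mul_pow (ha : 0 < a) (hd : d ≠ 0) {x : ℝ}
    (hx : 0 ≤ x) :
    IntegrableOn (fun s : ℝ => a * d * s ^ (d - 1) * exp (-(a * s ^ d))) (Ioi x) :=
  (IntegrableOn.mono_set ((integrableOn_pow_mul_exp_neg_mul_pow ha hd (d - 1)).const_mul (a * d))
    (Ioi_subset_Ioi hx)).congr_fun (fun s _ => by ring) measurableSet_Ioi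

theorem integral_Ioi_mul_pow_mul_exp_neg_mul_pow (ha : 0 < a) (hd : d ≠ 0) {x : ℝ} (hx : 0 ≤ x) :
    ∫ s in Ioi x, a * d * s ^ (d - 1) * exp (-(a * s ^ d)) = exp (-(a * x ^ d)) := by
  have hderiv (s : ℝ) : HasDerivAt (fun s : ℝ => -exp (-(a * s ^ d)))
      (a * d * s ^ (d - 1) * exp (-(a * s ^ d))) s := by
    have h : HasDerivAt (fun s : ℝ => -exp (-(a * s ^ d)))
        (-(exp (-(a * s ^ d)) * -(a * (d * s ^ (d - 1))))) s :=
      ((hasDerivAt_pow d s).const_mul a).neg.exp.neg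
    convert h using 1
    ring
  have hlim : Filter.Tendsto (fun s : ℝ => -exp (-(a * s ^ d))) Filter.atTop (nhds 0) := by
    simpa using (tendsto_exp_atBot.comp (Filter.tendsto_neg_atTop_atBot.comp
      ((Filter.tendsto_pow_atTop hd).const_mul_atTop ha))).neg
  rw [integral_Ioi_of_hasDerivAt_of_tendsto' (fun s _ => hderiv s)
    (integrableOn_Ioi_mul_pow_mul_exp_neg_mul_pow ha hd hx) hlim]
  ring

theorem ofReal_exp_neg_mul_pow_eq_setLIntegral (ha : 0 < a) (hd : d ≠ 0) {x : ℝ} (hx : 0 ≤ x) :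
    ENNReal.ofReal (exp (-(a * x ^ d)))
      = ∫⁻ s in Ioi x, ENNReal.ofReal (a * d * s ^ (d - 1) * exp (-(a * s ^ d))) := by
  rw [← integral_Ioi_mul_pow_mul_exp_neg_mul_pow ha hd hx, ofReal_integral_eq_lintegral_ofReal
    (integrableOn_Ioi_mul_pow_mul_exp_neg_mul_pow ha hd hx)]
  refine (ae_restrict_iff' measurableSet_Ioi).2 (Filter.Eventually.of_forall fun s hs => ?_)
  have : 0 ≤ s := hx.trans (le_of_lt hs)
  positivity

theorem integral_Ioi_mul_pow_mul_exp_neg_mul_pow_mul_self (ha : 0 < a) (hd : d ≠ 0) :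
    ∫ s in Ioi 0, a * d * s ^ (d - 1) * exp (-(a * s ^ d)) * s
      = a ^ (-(1 / d : ℝ)) * Gamma (1 / d) / d := by
  have hd' : (0 : ℝ) < d := by positivity
  calc ∫ s in Ioi 0, a * d * s ^ (d - 1) * exp (-(a * s ^ d)) * s
      = ∫ s in Ioi 0, a * d * (s ^ (d : ℝ) * exp (-a * s ^ (d : ℝ))) := by
        refine setIntegral_congr_fun measurableSet_Ioi fun s _ => ?_
        rw [rpow_natCast, neg_mul, ← pow_sub_one_mul hd s]
        ring
    _ = a * d * (a ^ (-(d + 1) / d : ℝ) * (1 / d) * Gamma ((d + 1) / d)) := by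
        rw [integral_const_mul, integral_rpow_mul_exp_neg_mul_rpow hd' (by linarith) ha]
    _ = a ^ (-(1 / d : ℝ)) * Gamma (1 / d) / d := by
        have hexp : -(d + 1) / d = -(1 / d : ℝ) + -1 := by field_simp; ring
        have hΓ : ((d + 1) / d : ℝ) = 1 / d + 1 := by field_simp; ring
        rw [hexp, rpow_add ha, rpow_neg_one, hΓ, Gamma_add_one (by positivity)]
        field_simp

end WeibullTail

section DistributionBound

variable {α : Type*} [MeasurableSpace α] {a c : ℝ} {d : ℕ} {l : α → ℝ}

theorem lintegral_exp_neg_mul_pow_le_of_measure_lt_le (μ : Measure α) [SFinite μ] (ha : 0 < a)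
    (hd : d ≠ 0) (hc : 0 ≤ c) (hl : Measurable l) (hl0 : ∀ y, 0 ≤ l y)
    (hdist : ∀ s, 0 < s → μ {y | l y < s} ≤ ENNReal.ofReal (c * s) * μ univ) :
    ∫⁻ y, ENNReal.ofReal (exp (-(a * l y ^ d))) ∂μ
      ≤ ENNReal.ofReal (c * (a ^ (-(1 / d : ℝ)) * Gamma (1 / d) / d)) * μ univ := by
  set G : ℝ → ℝ := fun s => a * d * s ^ (d - 1) * exp (-(a * s ^ d))
  have hG : Measurable G := by fun_prop
  have hG0 {s : ℝ} (hs : 0 < s) : 0 ≤ G s := by positivity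
  have hmoment : ∫⁻ s in Ioi 0, ENNReal.ofReal (G s * s)
      = ENNReal.ofReal (a ^ (-(1 / d : ℝ)) * Gamma (1 / d) / d) := by
    rw [← integral_Ioi_mul_pow_mul_exp_neg_mul_pow_mul_self ha hd,
      ofReal_integral_eq_lintegral_ofReal]
    · exact IntegrableOn.congr_fun
        ((integrableOn_pow_mul_exp_neg_mul_pow ha hd d).const_mul (a * d)) (fun s _ => by rw [← pow_sub_one_mul hd s]; ring) measurableSet_Ioi
    · exact (ae_restrict_iff' measurableSet_Ioi).2 (Filter.Eventually.of_forall fun s hs =>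
        mul_nonneg (hG0 hs) (le_of_lt hs))
  calc ∫⁻ y, ENNReal.ofReal (exp (-(a * l y ^ d))) ∂μ
      = ∫⁻ y, (∫⁻ s in Ioi (l y), ENNReal.ofReal (G s)) ∂μ :=
        lintegral_congr fun y => ofReal_exp_neg_mul_pow_eq_setLIntegral ha hd (hl0 y)
    _ = ∫⁻ s, ENNReal.ofReal (G s) * μ {y | l y < s} :=
        lintegral_setLIntegral_Ioi_eq_lintegral_mul_meas_lt μ hl hG.ennreal_ofReal
    _ = ∫⁻ s in Ioi 0, ENNReal.ofReal (G s) * μ {y | l y < s} := by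
        refine (setLIntegral_eq_of_support_subset fun s hs => ?_).symm
        by_contra hs0
        have hempty : {y | l y < s} = ∅ :=
          eq_empty_of_forall_notMem fun y hy => hs0 ((hl0 y).trans_lt hy)
        simp [hempty] at hs
    _ ≤ ∫⁻ s in Ioi 0, ENNReal.ofReal c * ENNReal.ofReal (G s * s) * μ univ := by
        refine setLIntegral_mono' measurableSet_Ioi fun s hs => ?_
        calc ENNReal.ofReal (G s) * μ {y | l y < s}
            ≤ ENNReal.ofReal (G s) * (ENNReal.ofReal (c * s) * μ univ) := by
              gcongr
              exact hdist s hs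
          _ = _ := by
              rw [ENNReal.ofReal_mul hc, ENNReal.ofReal_mul (hG0 hs)]
              ring
    _ = ENNReal.ofReal (c * (a ^ (-(1 / d : ℝ)) * Gamma (1 / d) / d)) * μ univ := by
        rw [lintegral_mul_const _ (by fun_prop), lintegral_const_mul _ (by fun_prop), hmoment,
          ENNReal.ofReal_mul hc]

theorem setIntegral_exp_neg_mul_pow_le_of_measure_lt_le (ν : Measure α) {A : Set α}
    (hA : ν A ≠ ∞) (ha : 0 < a) (hd : d ≠ 0) (hc : 0 ≤ c) (hl : Measurable l)
    (hl0 : ∀ y, 0 ≤ l y)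
    (hdist : ∀ s, 0 < s → ν ({y | l y < s} ∩ A) ≤ ENNReal.ofReal (c * s) * ν A) :
    ∫ y in A, exp (-(a * l y ^ d)) ∂ν
      ≤ c * (a ^ (-(1 / d : ℝ)) * Gamma (1 / d) / d) * (ν A).toReal := by
  have : IsFiniteMeasure (ν.restrict A) := isFiniteMeasure_restrict.2 hA
  have hlint := lintegral_exp_neg_mul_pow_le_of_measure_lt_le (ν.restrict A) ha hd hc hl hl0
    fun s hs => by
      have hmeas : MeasurableSet {y | l y < s} := hl measurableSet_Iio
      rw [Measure.restrict_apply hmeas, Measure.restrict_apply_univ]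
      exact hdist s hs
  rw [Measure.restrict_apply_univ] at hlint
  rw [integral_eq_lintegral_of_nonneg_ae (Filter.Eventually.of_forall fun y => (exp_pos _).le)
    (by fun_prop)]
  have hΓ : 0 < Gamma (1 / d) := Gamma_pos_of_pos (by positivity)
  calc _ ≤ (ENNReal.ofReal (c * (a ^ (-(1 / d : ℝ)) * Gamma (1 / d) / d)) * ν A).toReal :=
        ENNReal.toReal_mono (ENNReal.mul_ne_top ENNReal.ofReal_ne_top hA) hlint
    _ = _ := by rw [ENNReal.toReal_mul, ENNReal.toReal_ofReal (by positivity)]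

end DistributionBound

section Chord

variable {E : Type*} [NormedAddCommGroup E] [NormedSpace ℝ E]

noncomputable def chordLength (K : Set E) (u y : E) : ℝ :=
  (volume {t : ℝ | y + t • u ∈ K}).toReal

theorem measurable_chordLength [MeasurableSpace E] [BorelSpace E] [SecondCountableTopology E]
    {K : Set E} (hK : IsClosed K) (u : E) : Measurable (chordLength K u) :=
  ENNReal.measurable_toReal.comp
    (measurable_measure_prodMk_left (hK.preimage (by fun_prop : Continuous
      fun p : E × ℝ => p.1 + p.2 • u)).measurableSet)

theorem volume_chord_lt_top {K : Set E} (hK : Bornology.IsBounded K) {u : E} (hu : ‖u‖ = 1)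
    (y : E) : volume {t : ℝ | y + t • u ∈ K} < ∞ := by
  have hiso : Isometry fun t : ℝ => y + t • u :=
    Isometry.of_dist_eq fun s t => by
      rw [dist_add_left, dist_eq_norm, dist_eq_norm, ← sub_smul, norm_smul, hu, mul_one]
  exact (hiso.antilipschitz.isBounded_preimage hK).measure_lt_top

theorem Icc_subset_chord {K : Set E} (hK : Convex ℝ K) {r : ℝ} (hrK : closedBall 0 r ⊆ K)
    {u z : E} (hu : ‖u‖ ≤ 1) {t₀ : ℝ} (hz : z + t₀ • u ∈ K) {θ : ℝ} (hθ0 : 0 ≤ θ) (hθ1 : θ < 1) :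
    Icc (θ * t₀ - (1 - θ) * r) (θ * t₀ + (1 - θ) * r) ⊆ {t : ℝ | θ • z + t • u ∈ K} := by
  intro t ht
  have h1θ : 0 < 1 - θ := sub_pos.2 hθ1
  set v := (t - θ * t₀) / (1 - θ)
  have hv : |v| ≤ r := by
    rw [abs_div, abs_of_pos h1θ, div_le_iff₀ h1θ, abs_le]
    constructor <;> linarith [ht.1, ht.2]
  have hvK : v • u ∈ K := hrK <| by
    rw [mem_closedBall_zero_iff, norm_smul, Real.norm_eq_abs]
    exact (mul_le_of_le_one_right (abs_nonneg v) hu).trans hv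
  have hmem := hK hz hvK hθ0 h1θ.le (by ring)
  have hvt : (1 - θ) * v = t - θ * t₀ := mul_div_cancel₀ _ h1θ.ne'
  have heq : θ • (z + t₀ • u) + (1 - θ) • v • u = θ • z + t • u := by
    rw [smul_add, smul_smul, smul_smul, hvt, add_assoc, ← add_smul]
    congr 2
    ring
  rw [mem_ofPred_eq, ← heq]
  exact hmem

theorem le_chordLength_smul {K : Set E} (hKb : Bornology.IsBounded K) (hK : Convex ℝ K) {r : ℝ}
    (hrK : closedBall 0 r ⊆ K) {u z : E} (hu : ‖u‖ = 1) {t₀ : ℝ} (hz : z + t₀ • u ∈ K) {θ : ℝ}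
    (hθ0 : 0 ≤ θ) (hθ1 : θ < 1) : 2 * r * (1 - θ) ≤ chordLength K u (θ • z) := by
  refine (ENNReal.ofReal_le_iff_le_toReal (volume_chord_lt_top hKb hu _).ne).1 ?_
  calc ENNReal.ofReal (2 * r * (1 - θ))
      = volume (Icc (θ * t₀ - (1 - θ) * r) (θ * t₀ + (1 - θ) * r)) := by
        rw [Real.volume_Icc]; ring_nf
    _ ≤ _ := measure_mono (Icc_subset_chord hK hrK hu.le hz hθ0 hθ1)

variable [MeasurableSpace E] [BorelSpace E]

theorem hausdorffMeasure_sdiff_smul_le {e : ℝ} (he : 1 ≤ e) {S : Set E} (hS : StarConvex ℝ 0 S)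
    (hSm : MeasurableSet S) (hfin : μH[e] S ≠ ∞) {θ : ℝ} (hθ0 : 0 < θ) (hθ1 : θ ≤ 1) :
    μH[e] (S \ θ • S) ≤ ENNReal.ofReal (e * (1 - θ)) * μH[e] S := by
  have hθS : θ • S ⊆ S := smul_set_subset_iff.2 fun x hx => hS.smul_mem hx hθ0.le hθ1
  have hscale : μH[e] (θ • S) = ENNReal.ofReal (θ ^ e) * μH[e] S := by
    rw [Measure.hausdorffMeasure_smul₀ (by linarith) hθ0.ne', ENNReal.smul_def, smul_eq_mul,
      ← ENNReal.ofReal_coe_nnreal, NNReal.coe_rpow, coe_nnnorm, Real.norm_of_nonneg hθ0.le]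
  have hbernoulli : 1 ≤ e * (1 - θ) + θ ^ e := by
    have := one_add_mul_self_le_rpow_one_add (s := θ - 1) (by linarith) he
    rw [add_sub_cancel] at this
    linarith
  rw [measure_sdiff hθS (hSm.const_smul₀ θ).nullMeasurableSet
      (ne_top_of_le_ne_top hfin (measure_mono hθS)), tsub_le_iff_right, hscale, ← add_mul,
    ← ENNReal.ofReal_add (by nlinarith) (by positivity)]
  calc μH[e] S = 1 * μH[e] S := (one_mul _).symm
    _ ≤ _ := by gcongr; exact ENNReal.one_le_ofReal.2 hbernoulli

theorem hausdorffMeasure_chordLength_lt_le {K S : Set E} {u : E} {r e s : ℝ}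
    (hKb : Bornology.IsBounded K) (hK : Convex ℝ K) (hr : 0 < r) (hrK : closedBall 0 r ⊆ K)
    (hu : ‖u‖ = 1) (he : 1 ≤ e) (hS : StarConvex ℝ 0 S) (hSm : MeasurableSet S)
    (hfin : μH[e] S ≠ ∞) (hchord : ∀ z ∈ S, ∃ t : ℝ, z + t • u ∈ K) (hs : 0 < s) :
    μH[e] ({y | chordLength K u y < s} ∩ S) ≤ ENNReal.ofReal (e / (2 * r) * s) * μH[e] S := by
  rcases lt_or_ge s (2 * r) with hs2r | hs2r
  · set θ := 1 - s / (2 * r)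
    have hθ0 : 0 < θ := by
      have : s / (2 * r) < 1 := (div_lt_one (by positivity)).2 hs2r
      linarith
    have hθ1 : θ < 1 := by
      have : 0 < s / (2 * r) := by positivity
      linarith
    have hsub : {y | chordLength K u y < s} ∩ S ⊆ S \ θ • S := by
      rintro y ⟨hy, hyS⟩
      refine ⟨hyS, ?_⟩
      rintro ⟨z, hz, rfl⟩
      obtain ⟨t₀, ht₀⟩ := hchord z hz
      have := le_chordLength_smul hKb hK hrK hu ht₀ hθ0.le hθ1
      have h2 : 2 * r * (1 - θ) = s := by simp only [θ]; field_simp; ring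
      exact absurd hy (not_lt.2 (h2 ▸ this))
    calc _ ≤ μH[e] (S \ θ • S) := measure_mono hsub
      _ ≤ ENNReal.ofReal (e * (1 - θ)) * μH[e] S :=
        hausdorffMeasure_sdiff_smul_le he hS hSm hfin hθ0 hθ1.le
      _ = _ := by congr 2; simp only [θ]; ring
  · calc _ ≤ μH[e] S := measure_mono inter_subset_right
      _ = 1 * μH[e] S := (one_mul _).symm
      _ ≤ _ := by
        gcongr
        refine ENNReal.one_le_ofReal.2 ?_
        rw [div_mul_eq_mul_div, le_div_iff₀ (by positivity)]
        nlinarith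

end Chord

theorem IsCompact.hausdorffMeasure_finrank_lt_top {E : Type*} [NormedAddCommGroup E]
    [NormedSpace ℝ E] [MeasurableSpace E] [BorelSpace E] {W : Submodule ℝ E}
    [FiniteDimensional ℝ W] {S : Set E} (hS : IsCompact S) (hSW : S ⊆ W) :
    μH[finrank ℝ W] S < ∞ := by
  rw [← image_preimage_eq_of_subset (Subtype.range_coe.symm ▸ hSW : S ⊆ range ((↑) : W → E)),
    isometry_subtype_coe.hausdorffMeasure_image (Or.inl (Nat.cast_nonneg _))]
  exact (isometry_subtype_coe.isClosedEmbedding.isCompact_preimage hS).measure_lt_top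

section ProjHyperplane

variable {d : ℕ} {u : EuclideanSpace ℝ (Fin d)}

theorem projHyperplane_add_inner_smul (hu : ‖u‖ = 1) (x : EuclideanSpace ℝ (Fin d)) :
    projHyperplane u x + ⟪u, x⟫ • u = x := by
  change (ℝ ∙ u)ᗮ.starProjection x + _ = x
  rw [Submodule.starProjection_orthogonal_val, Submodule.starProjection_singleton, hu]
  simp

theorem exists_add_smul_mem_of_mem_image_projHyperplane {K : Set (EuclideanSpace ℝ (Fin d))}
    (hu : ‖u‖ = 1) {z : EuclideanSpace ℝ (Fin d)} (hz : z ∈ projHyperplane u '' K) :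
    ∃ t : ℝ, z + t • u ∈ K := by
  obtain ⟨x, hx, rfl⟩ := hz
  exact ⟨⟪u, x⟫, (projHyperplane_add_inner_smul hu x).symm ▸ hx⟩

theorem hausdorffMeasure_image_projHyperplane_lt_top (hd : 1 ≤ d) (hu : u ≠ 0)
    {K : Set (EuclideanSpace ℝ (Fin d))} (hK : IsCompact K) :
    μH[(d : ℝ) - 1] (projHyperplane u '' K) < ∞ := by
  have : Fact (finrank ℝ (EuclideanSpace ℝ (Fin d)) = (d - 1) + 1) := ⟨by simp; omega⟩
  have h := (hK.image (ℝ ∙ u)ᗮ.starProjection.continuous).hausdorffMeasure_finrank_lt_top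
    (W := (ℝ ∙ u)ᗮ) <| by
      rintro _ ⟨x, -, rfl⟩
      exact Submodule.starProjection_apply_mem _ x
  rwa [Submodule.finrank_orthogonal_span_singleton (n := d - 1) hu, Nat.cast_sub hd,
    Nat.cast_one] at h

end ProjHyperplane

theorem integral_exp_chordLength_projection_bound
    {d : ℕ} (hd : 2 ≤ d) (K : Set (EuclideanSpace ℝ (Fin d)))
    (hKcp : IsCompact K) (hKcv : Convex ℝ K)
    (r : ℝ) (hr : 0 < r)
    (hrK : closedBall (0 : EuclideanSpace ℝ (Fin d)) r ⊆ K)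
    (u : EuclideanSpace ℝ (Fin d)) (hu : ‖u‖ = 1)
    (lam : ℝ) (hlam : 0 < lam) :
    (∫ y in projHyperplane u '' K,
        Real.exp (-(lam * (volume (closedBall (0 : EuclideanSpace ℝ (Fin d)) 1)).toReal
          * (volume {t : ℝ | y + t • u ∈ K}).toReal ^ d)) ∂(μH[(d : ℝ) - 1]))
      ≤ ((d : ℝ) - 1) / (2 * d)
          * (lam * (volume (closedBall (0 : EuclideanSpace ℝ (Fin d)) 1)).toReal) ^ (-(1 / (d : ℝ)))
          * Real.Gamma (1 / d) * r⁻¹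
          * (μH[(d : ℝ) - 1] (projHyperplane u '' K)).toReal := by
  set S := projHyperplane u '' K
  have hd1 : (1 : ℝ) ≤ d - 1 := by
    have : (2 : ℝ) ≤ d := by exact_mod_cast hd
    linarith
  have hS_cpt : IsCompact S := hKcp.image (ℝ ∙ u)ᗮ.starProjection.continuous
  have hS_star : StarConvex ℝ 0 S :=
    (hKcv.linear_image (ℝ ∙ u)ᗮ.starProjection.toLinearMap).starConvex
      ⟨0, hrK (mem_closedBall_self hr.le), map_zero (ℝ ∙ u)ᗮ.starProjection⟩
  have hS_fin : μH[(d : ℝ) - 1] S ≠ ∞ :=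
    (hausdorffMeasure_image_projHyperplane_lt_top (by omega)
      (norm_ne_zero_iff.1 (hu ▸ one_ne_zero)) hKcp).ne
  have hκ : 0 < (volume (closedBall (0 : EuclideanSpace ℝ (Fin d)) 1)).toReal :=
    ENNReal.toReal_pos (measure_closedBall_pos _ _ one_pos).ne' measure_closedBall_lt_top.ne
  refine (setIntegral_exp_neg_mul_pow_le_of_measure_lt_le _ hS_fin (mul_pos hlam hκ) (by omega)
    (div_nonneg (by linarith) (by positivity)) (measurable_chordLength hKcp.isClosed u)
    (fun _ => ENNReal.toReal_nonneg) fun s hs => hausdorffMeasure_chordLength_lt_le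
      hKcp.isBounded hKcv hr hrK hu hd1 hS_star hS_cpt.isClosed.measurableSet hS_fin
      (fun _ => exists_add_smul_mem_of_mem_image_projHyperplane hu) hs).trans_eq ?_
  ring
end
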